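/- arXiv:2208.02431 — 2 statements merged into one kernel-verified Lean document; each statement's English description precedes it below -/
import Mathlib

section
/- Let k_s ≥ 1 be a natural number, let A ⊆ B ⊆ C be finite sets of users (A playing the role of the uncovered users D'_{sd} of the smaller disk D_{sd} of server s, B the uncovered users D'_{su} of the larger disk, and C the user set of D_{sd}), with |A| = k_s. Let θ : users → ℝ, β_{su} ≥ 0, β_{sd} ≥ 0, and γ_{·,sd} : C → ℝ with γ_{h,sd} ≥ 0 for all h ∈ C and γ_{h,sd} = 0 for h ∈ C \ A. Suppose θ_h = β_{su} for every h ∈ B, that the larger disk's constraint is tight, k_s · β_{su} = p_{su}, that the smaller disk has strictly smaller power, p_{sd} < p_{su}, and that dual feasibility of the user constraints holds on A: θ_h ≤ β_{sd} + γ_{h,sd} for every h ∈ A. Then k_s · β_{sd} + ∑_{h ∈ C} γ_{h,sd} ≥ p_{su} > p_{sd}; i.e., the dual disk constraint k_s · β_{sd} + ∑_{h ∈ C} γ_{h,sd} ≤ p_{sd} is violated. (This is the contradiction showing that in algorithm PD a tight disk D_{su} always satisfies |D'_{su}| ≤ k_s, so the selected disk has enough capacity to cover all its uncovered users.) -/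
open Finset

theorem Finset.card_nsmul_le_card_nsmul_add_sum {ι M : Type*} [AddCommMonoid M] [PartialOrder M]
    [IsOrderedAddMonoid M] {s : Finset ι} {a b : M} {f : ι → M}
    (h : ∀ i ∈ s, a ≤ b + f i) :
    #s • a ≤ #s • b + ∑ i ∈ s, f i := by
  rw [← sum_const, ← sum_const, ← sum_add_distrib]
  exact sum_le_sum h

theorem cmpc_tight_disk_capacity_contradiction_general
    (User : Type) [DecidableEq User]
    (A B C : Finset User) (hAB : A ⊆ B) (hBC : B ⊆ C)
    (ks : ℕ) (hA : A.card = ks)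
    (θ : User → ℝ) (βsu βsd : ℝ)
    (γsd : User → ℝ) (hγ0 : ∀ h ∈ C \ A, γsd h = 0)
    (psu psd : ℝ)
    (hθB : ∀ h ∈ B, θ h = βsu)
    (htight : (ks : ℝ) * βsu = psu)
    (hps : psd < psu)
    (hfeas : ∀ h ∈ A, θ h ≤ βsd + γsd h) :
    psu ≤ (ks : ℝ) * βsd + ∑ h ∈ C, γsd h ∧
    psd < (ks : ℝ) * βsd + ∑ h ∈ C, γsd h := by
  have hsum : ∑ h ∈ A, γsd h = ∑ h ∈ C, γsd h :=
    sum_subset (hAB.trans hBC) fun h hC hA ↦ hγ0 h (mem_sdiff.mpr ⟨hC, hA⟩)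
  have hβ : ∀ h ∈ A, βsu ≤ βsd + γsd h := fun h hh ↦ hθB h (hAB hh) ▸ hfeas h hh
  have key : psu ≤ (ks : ℝ) * βsd + ∑ h ∈ C, γsd h := by
    have := card_nsmul_le_card_nsmul_add_sum hβ
    rwa [nsmul_eq_mul, nsmul_eq_mul, hA, htight, hsum] at this
  exact ⟨key, hps.trans_le key⟩

/-- the contradiction in the proof of Lemma 1 of the paper. If the tight
larger disk has `θ h = β_su` on its uncovered users `B`, `k_s · β_su = p_su`,
`p_sd < p_su`, and dual feasibility of the user constraints holds on the uncovered users
`A` (with `|A| = k_s`) of the smaller disk, then the smaller disk's dual constraint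
`k_s · β_sd + ∑_{h ∈ C} γ_{h,sd} ≤ p_sd` is violated. -/
theorem cmpc_tight_disk_capacity_contradiction
    (User : Type) [DecidableEq User]
    (A B C : Finset User) (hAB : A ⊆ B) (hBC : B ⊆ C)
    (ks : ℕ) (hks : 1 ≤ ks) (hA : A.card = ks)
    (θ : User → ℝ) (βsu βsd : ℝ) (hβsu : 0 ≤ βsu) (hβsd : 0 ≤ βsd)
    (γsd : User → ℝ) (hγ : ∀ h ∈ C, 0 ≤ γsd h) (hγ0 : ∀ h ∈ C \ A, γsd h = 0)
    (psu psd : ℝ)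
    (hθB : ∀ h ∈ B, θ h = βsu)
    (htight : (ks : ℝ) * βsu = psu)
    (hps : psd < psu)
    (hfeas : ∀ h ∈ A, θ h ≤ βsd + γsd h) :
    psu ≤ (ks : ℝ) * βsd + ∑ h ∈ C, γsd h ∧
    psd < (ks : ℝ) * βsd + ∑ h ∈ C, γsd h :=
  cmpc_tight_disk_capacity_contradiction_general User A B C hAB hBC ks hA θ βsu βsd γsd hγ0 psu psd
    hθB htight hps hfeas
end

section
/- Consider the CMPC instance with m servers S, users U, capacities k : S → ℕ, candidate disks 𝒟 indexed by server–user pairs, powers p_{ij} ≥ 0, where D_{ij} also denotes the set of users contained in disk D_{ij} and 𝒟_i denotes the disks centered at server i. Let (θ, β, γ) with θ : U → ℝ≥0, β : 𝒟 → ℝ≥0, γ : U × 𝒟 → ℝ≥0 be feasible for the dual LP with μ ≡ 0, i.e., θ_h ≤ β_{ij} + γ_{h,ij} for every user h ∈ D_{ij} and k_i·β_{ij} + ∑_{h ∈ D_{ij}} γ_{h,ij} ≤ p_{ij} for every disk D_{ij}. Let 𝒟̂ ⊆ 𝒟 contain at most one disk per server, and suppose every chosen disk's power is exactly charged to a set of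 the users it contains: for each D_{ij} ∈ 𝒟̂ there is δ(D_{ij}) ⊆ D_{ij} with p_{ij} = ∑_{h ∈ δ(D_{ij})} θ_h. Then for every integral primal feasible solution (x, y) of the CMPC integer program (x_{ij}, y_{h,ij} ∈ {0,1} satisfying: every user h is covered, ∑_{D_{ij}: h ∈ D_{ij}} y_{h,ij} ≥ 1; capacity, k_i·x_{ij} ≥ ∑_{h ∈ D_{ij}} y_{h,ij}; coverage only by selected disks, x_{ij} ≥ y_{h,ij} for h ∈ D_{ij}; and at most one disk per server, ∑_{D_{ij} ∈ 𝒟_i} x_{ij} ≤ 1), the total power of the chosen disks satisfies ∑_{D_{ij} ∈ 𝒟̂} p_{ij} ≤ m · ∑_{D_{ij} ∈ 𝒟} p_{ij}·x_{ij}. In particular, ∑_{D_{ij} ∈ 𝒟̂} p_{ij} ≤ m · OPT, where OPT is the minimum power of an integral feasible cover. -/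
/-!
Weak duality gives `∑_h θ_h ≤ ∑ p_{ij} x_{ij}` for every integral feasible `(x, y)`. Each chosen
disk is paid for by part of the users' dual values, so its power is at most `∑_h θ_h`, and at most
one disk per server, i.e. at most `m` disks, is chosen.
-/

open Finset

section WeakDuality

lemma le_sum_mul_of_one_le_sum {D : Type*} {t : Finset D} {y w : D → ℝ} {θ : ℝ}
    (hθ : 0 ≤ θ) (hy : ∀ d ∈ t, 0 ≤ y d) (hcover : 1 ≤ ∑ d ∈ t, y d)
    (hw : ∀ d ∈ t, θ ≤ w d) :
    θ ≤ ∑ d ∈ t, y d * w d :=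
  calc θ ≤ (∑ d ∈ t, y d) * θ := le_mul_of_one_le_left hθ hcover
    _ = ∑ d ∈ t, y d * θ := sum_mul ..
    _ ≤ ∑ d ∈ t, y d * w d := sum_le_sum fun d hd => mul_le_mul_of_nonneg_left (hw d hd) (hy d hd)

lemma sum_mul_add_le_mul_of_dual_le {U : Type*} {s : Finset U} {y γ : U → ℝ} {β c p x : ℝ}
    (hβ : 0 ≤ β) (hγ : ∀ h ∈ s, 0 ≤ γ h) (hx : 0 ≤ x)
    (hcap : ∑ h ∈ s, y h ≤ c * x) (hyx : ∀ h ∈ s, y h ≤ x)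
    (hdual : c * β + ∑ h ∈ s, γ h ≤ p) :
    ∑ h ∈ s, y h * (β + γ h) ≤ p * x := by
  have hγ_part : ∑ h ∈ s, y h * γ h ≤ ∑ h ∈ s, x * γ h :=
    sum_le_sum fun h hh => mul_le_mul_of_nonneg_right (hyx h hh) (hγ h hh)
  calc ∑ h ∈ s, y h * (β + γ h) = (∑ h ∈ s, y h) * β + ∑ h ∈ s, y h * γ h := by
        simp only [mul_add, sum_add_distrib, sum_mul]
    _ ≤ c * x * β + ∑ h ∈ s, x * γ h :=
        add_le_add (mul_le_mul_of_nonneg_right hcap hβ) hγ_part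
    _ = x * (c * β + ∑ h ∈ s, γ h) := by rw [← mul_sum]; ring
    _ ≤ x * p := mul_le_mul_of_nonneg_left hdual hx
    _ = p * x := mul_comm _ _

theorem sum_dual_le_primal_cost {U D : Type*} [Fintype U] [Fintype D] [DecidableEq U]
    (users : D → Finset U) (cap p : D → ℝ) (θ : U → ℝ) (β : D → ℝ) (γ : U → D → ℝ)
    (x : D → ℝ) (y : U → D → ℝ)
    (hθ : ∀ h, 0 ≤ θ h) (hβ : ∀ d, 0 ≤ β d) (hγ : ∀ h d, 0 ≤ γ h d)
    (hdual1 : ∀ d, ∀ h ∈ users d, θ h ≤ β d + γ h d)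
    (hdual2 : ∀ d, cap d * β d + ∑ h ∈ users d, γ h d ≤ p d)
    (hx : ∀ d, 0 ≤ x d) (hy : ∀ h d, 0 ≤ y h d)
    (hcover : ∀ h, 1 ≤ ∑ d ∈ univ.filter (fun d => h ∈ users d), y h d)
    (hcap : ∀ d, ∑ h ∈ users d, y h d ≤ cap d * x d)
    (hyx : ∀ d, ∀ h ∈ users d, y h d ≤ x d) :
    ∑ h, θ h ≤ ∑ d, p d * x d :=
  calc ∑ h, θ h
      ≤ ∑ h, ∑ d ∈ univ.filter (fun d => h ∈ users d), y h d * (β d + γ h d) :=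
        sum_le_sum fun h _ => le_sum_mul_of_one_le_sum (hθ h) (fun d _ => hy h d) (hcover h)
          fun d hd => hdual1 d h (mem_filter.1 hd).2
    _ = ∑ d, ∑ h ∈ users d, y h d * (β d + γ h d) :=
        sum_comm' fun h d => by simp [and_comm]
    _ ≤ ∑ d, p d * x d :=
        sum_le_sum fun d _ => sum_mul_add_le_mul_of_dual_le (hβ d) (fun h _ => hγ h d) (hx d)
          (hcap d) (hyx d) (hdual2 d)

end WeakDuality

lemma card_le_card_of_fiber_card_le_one {D S : Type*} [Fintype S] [DecidableEq S]
    (f : D → S) (s : Finset D) (hfiber : ∀ i, (s.filter (fun d => f d = i)).card ≤ 1) :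
    s.card ≤ Fintype.card S :=
  calc s.card ≤ 1 * (s.image f).card := card_le_mul_card_image s 1 fun i _ => hfiber i
    _ ≤ Fintype.card S := by rw [one_mul]; exact card_le_univ _

lemma nonneg_of_eq_zero_or_eq_one {a : ℝ} (ha : a = 0 ∨ a = 1) : 0 ≤ a := by
  rcases ha with rfl | rfl <;> norm_num

theorem cmpc_primal_dual_m_approximation_general
    (S U D : Type) [Fintype S] [Fintype U] [Fintype D] [DecidableEq S] [DecidableEq U]
    (center : D → S) (p : D → ℝ)
    (users : D → Finset U) (k : S → ℕ)
    -- dual feasibility with μ ≡ 0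
    (θ : U → ℝ) (β : D → ℝ) (γ : U → D → ℝ)
    (hθ : ∀ h : U, 0 ≤ θ h) (hβ : ∀ dd : D, 0 ≤ β dd)
    (hγ : ∀ (h : U) (dd : D), 0 ≤ γ h dd)
    (hdual1 : ∀ dd : D, ∀ h ∈ users dd, θ h ≤ β dd + γ h dd)
    (hdual2 : ∀ dd : D, (k (center dd) : ℝ) * β dd + ∑ h ∈ users dd, γ h dd ≤ p dd)
    -- the chosen disks: at most one per server, each exactly charged to users it contains
    (𝒟hat : Finset D)
    (hone : ∀ i : S, (𝒟hat.filter (fun dd => center dd = i)).card ≤ 1)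
    (δ : D → Finset U)
    (hcharge : ∀ dd ∈ 𝒟hat, p dd = ∑ h ∈ δ dd, θ h)
    -- integral primal feasible solution (x, y)
    (x : D → ℝ) (y : U → D → ℝ)
    (hxint : ∀ dd : D, x dd = 0 ∨ x dd = 1)
    (hyint : ∀ (h : U) (dd : D), y h dd = 0 ∨ y h dd = 1)
    (h1 : ∀ h : U, 1 ≤ ∑ dd ∈ Finset.univ.filter (fun dd => h ∈ users dd), y h dd)
    (h2 : ∀ dd : D, ∑ h ∈ users dd, y h dd ≤ (k (center dd) : ℝ) * x dd)
    (h3 : ∀ dd : D, ∀ h ∈ users dd, y h dd ≤ x dd) :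
    ∑ dd ∈ 𝒟hat, p dd ≤ (Fintype.card S : ℝ) * ∑ dd : D, p dd * x dd := by
  have hweak : ∑ h, θ h ≤ ∑ dd, p dd * x dd :=
    sum_dual_le_primal_cost users (fun dd => k (center dd)) p θ β γ x y hθ hβ hγ hdual1 hdual2
      (fun dd => nonneg_of_eq_zero_or_eq_one (hxint dd))
      (fun h dd => nonneg_of_eq_zero_or_eq_one (hyint h dd)) h1 h2 h3
  have hchosen : ∀ dd ∈ 𝒟hat, p dd ≤ ∑ h, θ h := fun dd hdd =>
    (hcharge dd hdd).trans_le (sum_le_univ_sum_of_nonneg hθ)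
  have hcard : (𝒟hat.card : ℝ) ≤ Fintype.card S := by
    exact_mod_cast card_le_card_of_fiber_card_le_one center 𝒟hat hone
  calc ∑ dd ∈ 𝒟hat, p dd ≤ 𝒟hat.card * ∑ h, θ h := by
        simpa only [nsmul_eq_mul] using sum_le_card_nsmul 𝒟hat p _ hchosen
    _ ≤ Fintype.card S * ∑ dd, p dd * x dd :=
        mul_le_mul hcard hweak (sum_nonneg fun h _ => hθ h) (Nat.cast_nonneg _)

/-- Theorem 1 of the paper, approximation guarantee: if `(θ, β, γ)` is dual
feasible with `μ ≡ 0`, the algorithm's output `𝒟̂` picks at most one disk per server and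
the power of each chosen disk is exactly charged to a subset `δ` of its users, then for
every integral primal feasible solution `(x, y)` of the CMPC integer program, the total
power of the chosen disks is at most `m` times the power of `(x, y)`; in particular it is
at most `m · OPT`, where `m` is the number of servers. -/
theorem cmpc_primal_dual_m_approximation
    (S U D : Type) [Fintype S] [Fintype U] [Fintype D] [DecidableEq S] [DecidableEq U]
    (center : D → S) (p : D → ℝ) (hp : ∀ dd : D, 0 ≤ p dd)
    (users : D → Finset U) (k : S → ℕ)
    -- dual feasibility with μ ≡ 0
    (θ : U → ℝ) (β : D → ℝ) (γ : U → D → ℝ)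
    (hθ : ∀ h : U, 0 ≤ θ h) (hβ : ∀ dd : D, 0 ≤ β dd)
    (hγ : ∀ (h : U) (dd : D), 0 ≤ γ h dd)
    (hdual1 : ∀ dd : D, ∀ h ∈ users dd, θ h ≤ β dd + γ h dd)
    (hdual2 : ∀ dd : D, (k (center dd) : ℝ) * β dd + ∑ h ∈ users dd, γ h dd ≤ p dd)
    -- the chosen disks: at most one per server, each exactly charged to users it contains
    (𝒟hat : Finset D)
    (hone : ∀ i : S, (𝒟hat.filter (fun dd => center dd = i)).card ≤ 1)
    (δ : D → Finset U)
    (hδsub : ∀ dd ∈ 𝒟hat, δ dd ⊆ users dd)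
    (hcharge : ∀ dd ∈ 𝒟hat, p dd = ∑ h ∈ δ dd, θ h)
    -- integral primal feasible solution (x, y)
    (x : D → ℝ) (y : U → D → ℝ)
    (hxint : ∀ dd : D, x dd = 0 ∨ x dd = 1)
    (hyint : ∀ (h : U) (dd : D), y h dd = 0 ∨ y h dd = 1)
    (h1 : ∀ h : U, 1 ≤ ∑ dd ∈ Finset.univ.filter (fun dd => h ∈ users dd), y h dd)
    (h2 : ∀ dd : D, ∑ h ∈ users dd, y h dd ≤ (k (center dd) : ℝ) * x dd)
    (h3 : ∀ dd : D, ∀ h ∈ users dd, y h dd ≤ x dd)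
    (h4 : ∀ i : S, ∑ dd ∈ Finset.univ.filter (fun dd => center dd = i), x dd ≤ 1) :
    ∑ dd ∈ 𝒟hat, p dd ≤ (Fintype.card S : ℝ) * ∑ dd : D, p dd * x dd :=
  cmpc_primal_dual_m_approximation_general S U D center p users k θ β γ hθ hβ hγ hdual1 hdual2 𝒟hat
    hone δ hcharge x y hxint hyint h1 h2 h3
end
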